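/- arXiv:1712.09988 — 2 statements merged into one kernel-verified Lean document; each statement's English description precedes it below -/
import Mathlib

section
/- Let Q̃ and Q̂ be symmetric positive semidefinite d×d matrices, T ⊆ {1,…,d} with |T| = s, c̄ ≥ 1, and suppose the restricted eigenvalue κ = κ(Q̃,T,c̄) := min over nonzero δ with ‖δ_{T^c}‖₁ ≤ c̄‖δ_T‖₁ of (√s · √(δᵀQ̃δ)) / ‖δ_T‖₁ is positive. Let q = max_{m,j} |Q̂_{m,j} − Q̃_{m,j}|. Then for every δ in the restricted set RE(c̄), (1 − q(1+c̄)²s/κ²) · δᵀQ̃δ ≤ δᵀQ̂δ ≤ (1 + q(1+c̄)²s/κ²) · δᵀQ̃δ. -/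
open Matrix Finset

/-- The restriction of a vector `δ` to a coordinate set `T` (zero outside `T`). -/
def restr {d : ℕ} (T : Finset (Fin d)) (δ : Fin d → ℝ) : Fin d → ℝ :=
  fun j => if j ∈ T then δ j else 0

/-- The ℓ₁ norm of a vector in `ℝ^d`. -/
def l1norm {d : ℕ} (δ : Fin d → ℝ) : ℝ := ∑ j, |δ j|

/-- The restricted cone `RE(c̄)`: nonzero vectors with `‖δ_{Tᶜ}‖₁ ≤ c̄ ‖δ_T‖₁`. -/
def inRE {d : ℕ} (T : Finset (Fin d)) (cbar : ℝ) (δ : Fin d → ℝ) : Prop :=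
  δ ≠ 0 ∧ l1norm (restr Tᶜ δ) ≤ cbar * l1norm (restr T δ)

/-- `κ` is a restricted-eigenvalue lower bound for `Q̃` on `RE(c̄)`:
`κ ‖δ_T‖₁ ≤ √s √(δᵀ Q̃ δ)` for all `δ` in the cone, where `s = |T|`. -/
def isREconst {d : ℕ} (Qt : Matrix (Fin d) (Fin d) ℝ) (T : Finset (Fin d))
    (cbar κ : ℝ) : Prop :=
  ∀ δ : Fin d → ℝ, inRE T cbar δ →
    κ * l1norm (restr T δ) ≤ Real.sqrt (T.card) * Real.sqrt (δ ⬝ᵥ Qt.mulVec δ)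

/-
The quadratic forms differ by `δᵀ(Q̂ - Q̃)δ`, which the entrywise bound `q` controls by
`q ‖δ‖₁²`. On the cone `‖δ‖₁ ≤ (1 + c̄) ‖δ_T‖₁`, and the restricted eigenvalue condition
squared gives `κ² ‖δ_T‖₁² ≤ s δᵀQ̃δ`, so the perturbation is at most
`q (1 + c̄)² s / κ² · δᵀQ̃δ`.
-/

section RestrictedCone

variable {d : ℕ}

lemma l1norm_nonneg (δ : Fin d → ℝ) : 0 ≤ l1norm δ :=
  Finset.sum_nonneg fun _ _ => abs_nonneg _

lemma l1norm_eq_restr_add_restr_compl (T : Finset (Fin d)) (δ : Fin d → ℝ) :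
    l1norm δ = l1norm (restr T δ) + l1norm (restr Tᶜ δ) := by
  simp only [l1norm, ← Finset.sum_add_distrib]
  refine Finset.sum_congr rfl fun j _ => ?_
  by_cases hj : j ∈ T <;> simp [restr, hj]

lemma l1norm_le_of_inRE {T : Finset (Fin d)} {cbar : ℝ} {δ : Fin d → ℝ}
    (hδ : inRE T cbar δ) : l1norm δ ≤ (1 + cbar) * l1norm (restr T δ) := by
  rw [l1norm_eq_restr_add_restr_compl T δ]
  linarith [hδ.2]

lemma abs_dotProduct_mulVec_le_l1norm_sq {M : Matrix (Fin d) (Fin d) ℝ} {q : ℝ}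
    (hM : ∀ m j, |M m j| ≤ q) (δ : Fin d → ℝ) :
    |δ ⬝ᵥ M *ᵥ δ| ≤ q * l1norm δ ^ 2 := by
  calc |δ ⬝ᵥ M *ᵥ δ| = |∑ m, ∑ j, δ m * (M m j * δ j)| := by
        simp only [dotProduct, mulVec, Finset.mul_sum]
    _ ≤ ∑ m, ∑ j, |δ m * (M m j * δ j)| :=
        (Finset.abs_sum_le_sum_abs _ _).trans
          (Finset.sum_le_sum fun m _ => Finset.abs_sum_le_sum_abs _ _)
    _ ≤ ∑ m, ∑ j, |δ m| * (q * |δ j|) := by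
        gcongr with m _ j _
        rw [abs_mul, abs_mul]
        gcongr
        exact hM m j
    _ = q * l1norm δ ^ 2 := by
        rw [l1norm, sq, Finset.sum_mul_sum, Finset.mul_sum]
        refine Finset.sum_congr rfl fun _ _ => ?_
        rw [Finset.mul_sum]
        exact Finset.sum_congr rfl fun _ _ => by ring

lemma isREconst.sq_mul_sq_le {Qt : Matrix (Fin d) (Fin d) ℝ} {T : Finset (Fin d)}
    {cbar κ : ℝ} (hRE : isREconst Qt T cbar κ) (hQt : Qt.PosSemidef) (hκ : 0 ≤ κ)
    {δ : Fin d → ℝ} (hδ : inRE T cbar δ) :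
    κ ^ 2 * l1norm (restr T δ) ^ 2 ≤ T.card * (δ ⬝ᵥ Qt *ᵥ δ) := by
  have hA : 0 ≤ δ ⬝ᵥ Qt *ᵥ δ := by simpa using hQt.dotProduct_mulVec_nonneg δ
  have h := pow_le_pow_left₀ (mul_nonneg hκ (l1norm_nonneg _)) (hRE δ hδ) 2
  rwa [mul_pow, mul_pow, Real.sq_sqrt (Nat.cast_nonneg _), Real.sq_sqrt hA] at h

end RestrictedCone

theorem stmt_4_general {d : ℕ} (Qt Qhat : Matrix (Fin d) (Fin d) ℝ)
    (hQt : Qt.PosSemidef)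
    (T : Finset (Fin d)) (s : ℕ) (hs : T.card = s)
    (cbar : ℝ)
    (κ : ℝ) (hκ : 0 < κ) (hRE : isREconst Qt T cbar κ)
    (q : ℝ) (hq : ∀ m j, |Qhat m j - Qt m j| ≤ q) :
    ∀ δ : Fin d → ℝ, inRE T cbar δ →
      (1 - q * (1 + cbar) ^ 2 * s / κ ^ 2) * (δ ⬝ᵥ Qt.mulVec δ)
        ≤ δ ⬝ᵥ Qhat.mulVec δ ∧
      δ ⬝ᵥ Qhat.mulVec δ
        ≤ (1 + q * (1 + cbar) ^ 2 * s / κ ^ 2) * (δ ⬝ᵥ Qt.mulVec δ) := by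
  intro δ hδ
  -- `δ ≠ 0` makes `Fin d` nonempty, so `hq` forces `q ≥ 0`.
  obtain ⟨m, -⟩ := Function.ne_iff.mp hδ.1
  have hq0 : 0 ≤ q := (abs_nonneg _).trans (hq m m)
  have hperturb : |δ ⬝ᵥ Qhat *ᵥ δ - δ ⬝ᵥ Qt *ᵥ δ|
      ≤ q * (1 + cbar) ^ 2 * l1norm (restr T δ) ^ 2 := by
    rw [← dotProduct_sub, ← sub_mulVec]
    calc _ ≤ q * l1norm δ ^ 2 := abs_dotProduct_mulVec_le_l1norm_sq hq δ
      _ ≤ q * ((1 + cbar) * l1norm (restr T δ)) ^ 2 := by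
          gcongr
          · exact l1norm_nonneg δ
          · exact l1norm_le_of_inRE hδ
      _ = _ := by ring
  have hcone := hRE.sq_mul_sq_le hQt hκ.le hδ
  rw [hs] at hcone
  have hbound : |δ ⬝ᵥ Qhat *ᵥ δ - δ ⬝ᵥ Qt *ᵥ δ|
      ≤ q * (1 + cbar) ^ 2 * s / κ ^ 2 * (δ ⬝ᵥ Qt *ᵥ δ) := by
    rw [div_mul_eq_mul_div, le_div_iff₀ (by positivity)]
    calc _ ≤ q * (1 + cbar) ^ 2 * l1norm (restr T δ) ^ 2 * κ ^ 2 :=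
          mul_le_mul_of_nonneg_right hperturb (sq_nonneg κ)
      _ = q * (1 + cbar) ^ 2 * (κ ^ 2 * l1norm (restr T δ) ^ 2) := by ring
      _ ≤ q * (1 + cbar) ^ 2 * (s * (δ ⬝ᵥ Qt *ᵥ δ)) := by gcongr
      _ = _ := by ring
  constructor <;> linarith [abs_le.mp hbound]

/-- Equivalence of the quadratic forms of `Q̂` and `Q̃` on the restricted cone,
up to the factor `q (1+c̄)² s / κ²` governed by the entrywise perturbation `q`. -/
theorem stmt_4 {d : ℕ} (Qt Qhat : Matrix (Fin d) (Fin d) ℝ)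
    (hQt : Qt.PosSemidef) (hQhat : Qhat.PosSemidef)
    (T : Finset (Fin d)) (s : ℕ) (hs : T.card = s)
    (cbar : ℝ) (hcbar : 1 ≤ cbar)
    (κ : ℝ) (hκ : 0 < κ) (hRE : isREconst Qt T cbar κ)
    (q : ℝ) (hq : ∀ m j, |Qhat m j - Qt m j| ≤ q) :
    ∀ δ : Fin d → ℝ, inRE T cbar δ →
      (1 - q * (1 + cbar) ^ 2 * s / κ ^ 2) * (δ ⬝ᵥ Qt.mulVec δ)
        ≤ δ ⬝ᵥ Qhat.mulVec δ ∧
      δ ⬝ᵥ Qhat.mulVec δ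
        ≤ (1 + q * (1 + cbar) ^ 2 * s / κ ^ 2) * (δ ⬝ᵥ Qt.mulVec δ) :=
  stmt_4_general Qt Qhat hQt T s hs cbar κ hκ hRE q hq
end

section
/- Under the setting of the previous Lasso cone property, additionally assume the restricted eigenvalue κ = κ(Q̃,T,c̄) > 0 with c̄ = (c+1)/(c−1), where Q̃ = (1/N)Σᵢ xᵢxᵢᵀ, and the basic inequality δᵀQ̃δ ≤ λ‖δ_T‖₁ holds for δ = β̂ − β₀. Then the prediction norm satisfies √(δᵀQ̃δ) ≤ λ√s/κ, where s = |T|. -/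
open Matrix Finset

/-- The empirical Gram matrix `Q̃ = (1/N) Σᵢ xᵢ xᵢᵀ`. -/
noncomputable def gram {N d : ℕ} (x : Fin N → Fin d → ℝ) :
    Matrix (Fin d) (Fin d) ℝ :=
  Matrix.of fun j k => (1 / (N : ℝ)) * ∑ i, x i j * x i k

/- Dividing `κ q ≤ κ λ a ≤ λ t √q` by `√q`; for `q ≤ 0` the square root is `0`. -/
theorem Real.sqrt_le_of_le_mul_of_mul_le_mul_sqrt {q a lam κ t : ℝ} (hlam : 0 ≤ lam)
    (hκ : 0 < κ) (ht : 0 ≤ t) (hq : q ≤ lam * a) (ha : κ * a ≤ t * √q) :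
    √q ≤ lam * t / κ := by
  rw [le_div_iff₀ hκ]
  rcases le_or_gt q 0 with hq0 | hq0
  · rw [Real.sqrt_eq_zero'.mpr hq0, zero_mul]
    positivity
  · have hsqrt : 0 < √q := Real.sqrt_pos.mpr hq0
    have hsq : √q * √q = q := Real.mul_self_sqrt hq0.le
    have : √q * κ * √q ≤ lam * t * √q := by
      calc √q * κ * √q = κ * q := by rw [mul_right_comm, hsq, mul_comm]
        _ ≤ κ * (lam * a) := by gcongr
        _ = lam * (κ * a) := by ring
        _ ≤ lam * (t * √q) := by gcongr
        _ = lam * t * √q := by ring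
    exact le_of_mul_le_mul_right this hsqrt

theorem isREconst.mul_l1norm_restr_le {d : ℕ} {Q : Matrix (Fin d) (Fin d) ℝ}
    {T : Finset (Fin d)} {cbar κ : ℝ} (hRE : isREconst Q T cbar κ) {δ : Fin d → ℝ}
    (hcone : l1norm (restr Tᶜ δ) ≤ cbar * l1norm (restr T δ)) :
    κ * l1norm (restr T δ) ≤ √(T.card : ℝ) * √(δ ⬝ᵥ Q *ᵥ δ) := by
  by_cases hδ : δ = 0
  · subst hδ
    simp [restr, l1norm]
  · exact hRE δ ⟨hδ, hcone⟩

theorem stmt_7_general {N d : ℕ} (x : Fin N → Fin d → ℝ)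
    (β₀ βhat : Fin d → ℝ) (T : Finset (Fin d)) (s : ℕ) (hs : T.card = s)
    (lam c : ℝ) (hlam : 0 < lam)
    (κ : ℝ) (hκ : 0 < κ)
    (hRE : isREconst (gram x) T ((c + 1) / (c - 1)) κ)
    (hcone : l1norm (restr Tᶜ (βhat - β₀))
      ≤ ((c + 1) / (c - 1)) * l1norm (restr T (βhat - β₀)))
    (hbasic : (βhat - β₀) ⬝ᵥ (gram x).mulVec (βhat - β₀)
      ≤ lam * l1norm (restr T (βhat - β₀))) :
    Real.sqrt ((βhat - β₀) ⬝ᵥ (gram x).mulVec (βhat - β₀))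
      ≤ lam * Real.sqrt s / κ := by
  subst hs
  exact Real.sqrt_le_of_le_mul_of_mul_le_mul_sqrt hlam.le hκ (Real.sqrt_nonneg _) hbasic
    (hRE.mul_l1norm_restr_le hcone)

/-- Prediction-norm bound for the Lasso: under the restricted eigenvalue
condition with `c̄ = (c+1)/(c−1)` and the basic inequality
`δᵀQ̃δ ≤ λ‖δ_T‖₁`, the error `δ = β̂ − β₀` satisfies `√(δᵀQ̃δ) ≤ λ√s/κ`. -/
theorem stmt_7 {N d : ℕ} (x : Fin N → Fin d → ℝ)
    (β₀ βhat : Fin d → ℝ) (T : Finset (Fin d)) (s : ℕ) (hs : T.card = s)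
    (lam c : ℝ) (hlam : 0 < lam) (hc : 1 < c)
    (κ : ℝ) (hκ : 0 < κ)
    (hRE : isREconst (gram x) T ((c + 1) / (c - 1)) κ)
    (hcone : l1norm (restr Tᶜ (βhat - β₀))
      ≤ ((c + 1) / (c - 1)) * l1norm (restr T (βhat - β₀)))
    (hbasic : (βhat - β₀) ⬝ᵥ (gram x).mulVec (βhat - β₀)
      ≤ lam * l1norm (restr T (βhat - β₀))) :
    Real.sqrt ((βhat - β₀) ⬝ᵥ (gram x).mulVec (βhat - β₀))
      ≤ lam * Real.sqrt s / κ :=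
  stmt_7_general x β₀ βhat T s hs lam c hlam κ hκ hRE hcone hbasic
end
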